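/- Let ⟨·,·⟩ have signature (2, n+1) on ℝ^{n+3}. Let u₀, v₀ span a plane of signature (0,2) with ⟨u₀,u₀⟩ = ⟨v₀,v₀⟩ = −1 and −1 < ⟨u₀,v₀⟩ < 0. Let T₁, T₂ ⊂ ℝ^{n+3} be 2-dimensional positive-definite subspaces with T₁ ⊥ u₀ and T₂ ⊥ v₀ (tangent planes to space-like surfaces), and suppose additionally T₁ ⊥ v₀ and T₂ ⊥ u₀ (first-order criticality). Then for every unit vector u̇ ∈ T₁ there exists a unit vector v̇ ∈ T₂ with ⟨u̇, v̇⟩ ≥ 1. -/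

import Mathlib

/-!
Since `pB n` has only two positive directions, no positive-definite subspace has dimension
above 2, so the orthogonal complement of the positive-definite plane `T₂` is negative
semidefinite. Writing `u̇ = p + q` with `p ∈ T₂` and `q ⊥ T₂` therefore gives
`⟨u̇, p⟩ = ⟨p, p⟩ ≥ ⟨u̇, u̇⟩ = 1`, and `v̇ = p / √⟨p, p⟩` satisfies
`⟨u̇, v̇⟩ = √⟨p, p⟩ ≥ 1`.
-/

noncomputable def pB (n : ℕ) : LinearMap.BilinForm ℝ (Fin (n + 3) → ℝ) :=
  Matrix.toBilin' (Matrix.diagonal fun i : Fin (n + 3) => if (i : ℕ) < 2 then (1 : ℝ) else -1)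

open Module LinearMap

namespace LinearMap.BilinForm

variable {V : Type*} [AddCommGroup V] [Module ℝ V] {B : LinearMap.BilinForm ℝ V}
  {T : Submodule ℝ V}

def IsPosDefOn (B : LinearMap.BilinForm ℝ V) (T : Submodule ℝ V) : Prop :=
  ∀ v ∈ T, v ≠ 0 → 0 < B v v

namespace IsPosDefOn

lemma nondegenerate_restrict (hT : B.IsPosDefOn T) : (B.restrict T).Nondegenerate := by
  refine ⟨fun x hx => ?_, fun x hx => ?_⟩ <;> by_contra hx₀ <;>
    exact (hT x x.2 (by simpa using hx₀)).ne' (hx x)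

lemma finrank_le_of_ker_nonpos {V₂ : Type*} [AddCommGroup V₂] [Module ℝ V₂]
    [FiniteDimensional ℝ V₂] (hT : B.IsPosDefOn T) (f : V →ₗ[ℝ] V₂)
    (hf : ∀ x ∈ ker f, B x x ≤ 0) : finrank ℝ T ≤ finrank ℝ V₂ := by
  refine LinearMap.finrank_le_finrank_of_injective (f := f.comp T.subtype) ?_
  rw [← ker_eq_bot, ker_eq_bot']
  intro x hx
  by_contra hx₀
  exact (hf x hx).not_gt (hT x x.2 (by simpa using hx₀))

lemma sup_span_singleton (hB : B.IsSymm) (hT : B.IsPosDefOn T) {q : V} (hq : 0 < B q q)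
    (hqT : q ∈ B.orthogonal T) : B.IsPosDefOn (T ⊔ Submodule.span ℝ {q}) := by
  intro v hv hv₀
  obtain ⟨t, ht, _, hc, rfl⟩ := Submodule.mem_sup.mp hv
  obtain ⟨c, rfl⟩ := Submodule.mem_span_singleton.mp hc
  have htq : B t q = 0 := hqT t ht
  have hqt : B q t = 0 := hB.eq t q ▸ htq
  have hexpand : B (t + c • q) (t + c • q) = B t t + c ^ 2 * B q q := by
    simp only [map_add, map_smul, LinearMap.add_apply, LinearMap.smul_apply, smul_eq_mul, htq, hqt]
    ring
  rw [hexpand]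
  rcases eq_or_ne t 0 with rfl | ht₀
  · have hc₀ : c ≠ 0 := by rintro rfl; simp at hv₀
    simpa using mul_pos (sq_pos_of_ne_zero hc₀) hq
  · exact add_pos_of_pos_of_nonneg (hT t ht ht₀) (by positivity)

lemma apply_self_nonpos_of_mem_orthogonal [FiniteDimensional ℝ V] (hB : B.IsSymm)
    (hT : B.IsPosDefOn T)
    (hmax : ∀ W : Submodule ℝ V, B.IsPosDefOn W → finrank ℝ W ≤ finrank ℝ T) {q : V}
    (hq : q ∈ B.orthogonal T) : B q q ≤ 0 := by
  by_contra! hqq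
  have hqT : q ∉ T := fun h => hqq.ne' (hq q h)
  have hle := hmax _ (hT.sup_span_singleton hB hqq hq)
  rw [Submodule.finrank_sup_span_singleton hqT] at hle
  omega

lemma exists_mem_apply_eq_apply_self_ge [FiniteDimensional ℝ V] (hB : B.IsSymm)
    (hT : B.IsPosDefOn T)
    (hmax : ∀ W : Submodule ℝ V, B.IsPosDefOn W → finrank ℝ W ≤ finrank ℝ T) (x : V) :
    ∃ p ∈ T, B x p = B p p ∧ B x x ≤ B p p := by
  have hcompl := isCompl_orthogonal_of_restrict_nondegenerate hB.isRefl hT.nondegenerate_restrict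
  have hx : x ∈ T ⊔ B.orthogonal T := hcompl.sup_eq_top ▸ Submodule.mem_top
  obtain ⟨p, hp, q, hq, rfl⟩ := Submodule.mem_sup.mp hx
  have hpq : B p q = 0 := hq p hp
  have hqp : B q p = 0 := hB.eq p q ▸ hpq
  have hqq := hT.apply_self_nonpos_of_mem_orthogonal hB hmax hq
  refine ⟨p, hp, by simp [hqp], ?_⟩
  simp only [map_add, LinearMap.add_apply, hpq, hqp]
  linarith

lemma exists_mem_apply_self_eq_one_le_apply [FiniteDimensional ℝ V] (hB : B.IsSymm)
    (hT : B.IsPosDefOn T)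
    (hmax : ∀ W : Submodule ℝ V, B.IsPosDefOn W → finrank ℝ W ≤ finrank ℝ T) {x : V}
    (hx : B x x = 1) : ∃ y ∈ T, B y y = 1 ∧ 1 ≤ B x y := by
  obtain ⟨p, hp, hxp, hpp⟩ := hT.exists_mem_apply_eq_apply_self_ge hB hmax x
  set s := √(B p p)
  have hs : 1 ≤ s := Real.one_le_sqrt.mpr (hx ▸ hpp)
  have hss : B p p = s * s := (Real.mul_self_sqrt (by linarith)).symm
  refine ⟨s⁻¹ • p, T.smul_mem _ hp, ?_, ?_⟩
  · simp only [map_smul, LinearMap.smul_apply, smul_eq_mul, hss]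
    field_simp
  · simp only [map_smul, smul_eq_mul, hxp, hss]
    field_simp
    exact hs

end IsPosDefOn

end LinearMap.BilinForm

open LinearMap.BilinForm

lemma pB_apply (n : ℕ) (x y : Fin (n + 3) → ℝ) :
    pB n x y = ∑ i : Fin (n + 3), (if (i : ℕ) < 2 then (1 : ℝ) else -1) * (x i * y i) := by
  simp only [pB, Matrix.toBilin'_apply', dotProduct, Matrix.mulVec_diagonal]
  congr 1; funext i; ring

lemma pB_isSymm (n : ℕ) : (pB n).IsSymm :=
  Matrix.isSymm_toBilin'_iff_isSymm.mpr (Matrix.isSymm_diagonal _)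

lemma pB_apply_self_nonpos {n : ℕ} {x : Fin (n + 3) → ℝ}
    (hx : ∀ i : Fin (n + 3), (i : ℕ) < 2 → x i = 0) : pB n x x ≤ 0 := by
  rw [pB_apply]
  refine Finset.sum_nonpos fun i _ => ?_
  split_ifs with hi
  · simp [hx i hi]
  · simpa using mul_self_nonneg (x i)

lemma pB_finrank_le_two {n : ℕ} {W : Submodule ℝ (Fin (n + 3) → ℝ)}
    (hW : (pB n).IsPosDefOn W) : finrank ℝ W ≤ 2 := by
  have h2 : 2 ≤ n + 3 := by omega
  refine (hW.finrank_le_of_ker_nonpos (funLeft ℝ ℝ (Fin.castLE h2)) fun x hx => ?_).trans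
    (by simp)
  exact pB_apply_self_nonpos fun i hi => congrFun hx ⟨i, hi⟩

theorem stmt12_general (n : ℕ)
    (T₁ T₂ : Submodule ℝ (Fin (n + 3) → ℝ))
    (hT₂dim : Module.finrank ℝ T₂ = 2)
    (hT₂pos : ∀ v ∈ T₂, v ≠ 0 → 0 < pB n v v) :
    ∀ du ∈ T₁, pB n du du = 1 →
      ∃ dv ∈ T₂, pB n dv dv = 1 ∧ 1 ≤ pB n du dv := fun _ _ hdu =>
  IsPosDefOn.exists_mem_apply_self_eq_one_le_apply (pB_isSymm n) hT₂pos
    (fun _ hW => hT₂dim ▸ pB_finrank_le_two hW) hdu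

/-- The step `⟨u̇₀, v̇₀⟩ ≥ 1` of the uniqueness proof: with `u₀, v₀` spanning a
negative-definite plane (`⟨u₀,u₀⟩ = ⟨v₀,v₀⟩ = −1`, `−1 < ⟨u₀,v₀⟩ < 0`) and `T₁, T₂`
positive-definite 2-planes orthogonal to both `u₀` and `v₀`, every unit vector
`u̇ ∈ T₁` admits a unit vector `v̇ ∈ T₂` with `⟨u̇, v̇⟩ ≥ 1`. -/
theorem stmt12 (n : ℕ) (u₀ v₀ : Fin (n + 3) → ℝ)
    (T₁ T₂ : Submodule ℝ (Fin (n + 3) → ℝ))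
    (hu₀ : pB n u₀ u₀ = -1) (hv₀ : pB n v₀ v₀ = -1)
    (hB₁ : -1 < pB n u₀ v₀) (hB₂ : pB n u₀ v₀ < 0)
    (hT₁dim : Module.finrank ℝ T₁ = 2) (hT₂dim : Module.finrank ℝ T₂ = 2)
    (hT₁pos : ∀ v ∈ T₁, v ≠ 0 → 0 < pB n v v)
    (hT₂pos : ∀ v ∈ T₂, v ≠ 0 → 0 < pB n v v)
    (hT₁u : ∀ v ∈ T₁, pB n v u₀ = 0) (hT₂v : ∀ v ∈ T₂, pB n v v₀ = 0)
    (hT₁v : ∀ v ∈ T₁, pB n v v₀ = 0) (hT₂u : ∀ v ∈ T₂, pB n v u₀ = 0) :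
    ∀ du ∈ T₁, pB n du du = 1 →
      ∃ dv ∈ T₂, pB n dv dv = 1 ∧ 1 ≤ pB n du dv :=
  stmt12_general n T₁ T₂ hT₂dim hT₂pos
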